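/- Let n ≥ 2, A > 0, α ≥ 0, l > 0, and let β satisfy n+1 ≤ β < α + 2n − 1; set γ = (β−n+1)/(n+α) ∈ (0,1). Then there exist constants N > 1 and M > 0 (depending only on A, α, β, n and l) such that the function W(x) = −M·x_n^γ·√(N²l² − |x'|²) satisfies det D²W(x) ≥ A·x_n^{β−n−1}·|W(x)|^{−α} at every point x = (x', x_n) with x_n > 0 and |x'| ≤ l. -/

import Mathlib

/-!
Write `t = xₙ`, `S = |x'|²`, `r = c - S` with `c = N²l²`, so that `W = -M t^γ r^{1/2}`.
Functions `C t^q r^p` form a family closed under differentiation, and `D²W` is the scalar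
matrix `M t^γ r^{-1/2}` plus a rank-two perturbation in the directions `x'` and `eₙ`
(which are orthogonal); the Weinstein–Aronszajn identity then gives
`det D²W = M^n γ t^{nγ-2} r^{-n/2} ((1-γ)c - γS)`.
Because `γ(n+α) = β-n+1`, the right-hand side `A t^{β-n-1} |W|^{-α}` carries the same
power `t^{nγ-2}`, so the inequality no longer involves `t`. With `N = 2/(1-γ)` both `r` and
`(1-γ)c - γS` are at least `l²` on `S ≤ l²`, and `M` is chosen so that `M^{n+α}` absorbs the
remaining constants.
-/

noncomputable def hessianDet {n : ℕ} (u : EuclideanSpace ℝ (Fin n) → ℝ)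
    (x : EuclideanSpace ℝ (Fin n)) : ℝ :=
  (Matrix.of fun i j : Fin n =>
    iteratedFDeriv ℝ 2 u x ![EuclideanSpace.single i (1 : ℝ), EuclideanSpace.single j (1 : ℝ)]).det

def lastIdx (n : ℕ) (hn : 0 < n) : Fin n := ⟨n - 1, Nat.sub_lt hn one_pos⟩

open Finset Real Topology

open Matrix in
theorem Matrix.det_smul_one_add_rankTwo {ι K : Type*} [Fintype ι] [DecidableEq ι] [Field K]
    (hι : 2 ≤ Fintype.card ι) {a : K} (ha : a ≠ 0) (b c d : K) (u e : ι → K)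
    (hue : u ⬝ᵥ e = 0) (he : e ⬝ᵥ e = 1) :
    (a • 1 + b • vecMulVec u u + c • (vecMulVec u e + vecMulVec e u)
        + (d - a) • vecMulVec e e).det
      = a ^ (Fintype.card ι - 2) * ((a + b * (u ⬝ᵥ u)) * d - c ^ 2 * (u ⬝ᵥ u)) := by
  set U : Matrix ι (Fin 2) K := of fun i => ![u i, e i]
  set V : Matrix (Fin 2) ι K := !![b, c; c, d - a] * Uᵀ
  have hsplit : b • vecMulVec u u + c • (vecMulVec u e + vecMulVec e u)
      + (d - a) • vecMulVec e e = U * V := by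
    ext i j
    simp [U, V, vecMulVec, Matrix.mul_apply, Fin.sum_univ_two, vecMul, dotProduct]
    ring
  have hVU : V * (a • (1 : Matrix ι ι K))⁻¹ * U
      = a⁻¹ • !![b * (u ⬝ᵥ u), c; c * (u ⬝ᵥ u), d - a] := by
    rw [Matrix.inv_eq_left_inv (B := a⁻¹ • 1) (by simp [smul_smul, ha]), Matrix.mul_smul,
      Matrix.mul_one, Matrix.smul_mul, Matrix.mul_assoc]
    have heu : e ⬝ᵥ u = 0 := by rwa [dotProduct_comm]
    simp only [dotProduct] at hue heu he
    congr 1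
    ext i j
    fin_cases i <;> fin_cases j <;>
      simp [U, Matrix.mul_apply, Fin.sum_univ_two, dotProduct, hue, heu, he]
  obtain ⟨m, hm⟩ := Nat.exists_eq_add_of_le' hι
  rw [add_assoc, add_assoc, ← add_assoc (b • _), hsplit, det_add_mul U V (by simp [ha]), hVU]
  simp [det_fin_two, hm]
  field_simp
  ring

section Calculus

variable {n : ℕ} (k : Fin n)

noncomputable def normSqErase (y : EuclideanSpace ℝ (Fin n)) : ℝ :=
  ∑ j ∈ univ.erase k, y j ^ 2

noncomputable def innerErase :
    EuclideanSpace ℝ (Fin n) →L[ℝ] EuclideanSpace ℝ (Fin n) →L[ℝ] ℝ :=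
  ∑ j ∈ univ.erase k, (EuclideanSpace.proj j).smulRight (EuclideanSpace.proj j)

theorem innerErase_apply (y v : EuclideanSpace ℝ (Fin n)) :
    innerErase k y v = ∑ j ∈ univ.erase k, y j * v j := by
  simp [innerErase]

theorem hasFDerivAt_normSqErase (x : EuclideanSpace ℝ (Fin n)) :
    HasFDerivAt (normSqErase k) ((2 : ℝ) • innerErase k x) x := by
  have h := (innerErase k).hasFDerivAt.clm_apply (hasFDerivAt_id x)
  refine (h.congr_fderiv ?_).congr_of_eventuallyEq
    (Filter.Eventually.of_forall fun y => ?_)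
  · ext v
    simp [innerErase_apply, two_mul, mul_comm]
  · simp [normSqErase, innerErase_apply, sq]

noncomputable def heightRadialPow (c C q p : ℝ) (y : EuclideanSpace ℝ (Fin n)) : ℝ :=
  C * y k ^ q * (c - normSqErase k y) ^ p

variable {k} {c : ℝ} {x : EuclideanSpace ℝ (Fin n)}

theorem hasFDerivAt_heightRadialPow (hx : 0 < x k) (hs : normSqErase k x < c) (C q p : ℝ) :
    HasFDerivAt (heightRadialPow k c C q p)
      (heightRadialPow k c (C * q) (q - 1) p x • EuclideanSpace.proj k +
        heightRadialPow k c (-2 * C * p) q (p - 1) x • innerErase k x) x := by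
  have ht := ((EuclideanSpace.proj (𝕜 := ℝ) k).hasFDerivAt (x := x)).rpow_const (p := q)
    (Or.inl hx.ne')
  have hr := ((hasFDerivAt_normSqErase k x).const_sub c).rpow_const (p := p)
    (Or.inl (sub_pos.2 hs).ne')
  refine ((ht.const_mul C).mul hr).congr_fderiv ?_
  ext v
  simp [heightRadialPow]
  ring

theorem eventually_pos_and_normSqErase_lt (hx : 0 < x k) (hs : normSqErase k x < c) :
    ∀ᶠ y in 𝓝 x, 0 < y k ∧ normSqErase k y < c :=
  (continuousAt_const.eventually_lt (EuclideanSpace.proj k).continuous.continuousAt hx).and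
    ((hasFDerivAt_normSqErase k x).continuousAt.eventually_lt continuousAt_const hs)

theorem iteratedFDeriv_two_heightRadialPow (hx : 0 < x k) (hs : normSqErase k x < c)
    (C q p : ℝ) (v w : EuclideanSpace ℝ (Fin n)) :
    iteratedFDeriv ℝ 2 (heightRadialPow k c C q p) x ![v, w] =
      heightRadialPow k c (C * q * (q - 1)) (q - 1 - 1) p x * v k * w k
      + heightRadialPow k c (-2 * C * q * p) (q - 1) (p - 1) x
          * (innerErase k x v * w k + v k * innerErase k x w)
      + heightRadialPow k c (4 * C * p * (p - 1)) q (p - 1 - 1) x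
          * innerErase k x v * innerErase k x w
      + heightRadialPow k c (-2 * C * p) q (p - 1) x * innerErase k v w := by
  have hgrad : fderiv ℝ (heightRadialPow k c C q p) =ᶠ[𝓝 x] fun y =>
      heightRadialPow k c (C * q) (q - 1) p y • EuclideanSpace.proj k +
        heightRadialPow k c (-2 * C * p) q (p - 1) y • innerErase k y :=
    (eventually_pos_and_normSqErase_lt hx hs).mono fun y hy =>
      (hasFDerivAt_heightRadialPow hy.1 hy.2 C q p).fderiv
  have hhess := ((hasFDerivAt_heightRadialPow hx hs (C * q) (q - 1) p).smul_const
    (EuclideanSpace.proj (𝕜 := ℝ) k)).fun_add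
    ((hasFDerivAt_heightRadialPow hx hs (-2 * C * p) q (p - 1)).fun_smul (innerErase k).hasFDerivAt)
  rw [iteratedFDeriv_two_apply, hgrad.fderiv_eq, hhess.fderiv]
  simp [heightRadialPow]
  ring

end Calculus

section Hessian

variable {n : ℕ} {k : Fin n} {c : ℝ} {x : EuclideanSpace ℝ (Fin n)}
open Matrix

theorem hessianDet_heightRadialPow (hn : 2 ≤ n) (hx : 0 < x k) (hs : normSqErase k x < c)
    (C q p : ℝ) (ha : heightRadialPow k c (-2 * C * p) q (p - 1) x ≠ 0) :
    hessianDet (heightRadialPow k c C q p) x =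
      heightRadialPow k c (-2 * C * p) q (p - 1) x ^ (n - 2) *
        ((heightRadialPow k c (-2 * C * p) q (p - 1) x
            + heightRadialPow k c (4 * C * p * (p - 1)) q (p - 1 - 1) x * normSqErase k x)
          * heightRadialPow k c (C * q * (q - 1)) (q - 1 - 1) p x
          - heightRadialPow k c (-2 * C * q * p) (q - 1) (p - 1) x ^ 2 * normSqErase k x) := by
  set u : Fin n → ℝ := fun j => if j = k then 0 else x j
  set e : Fin n → ℝ := Pi.single k 1
  have hmat : (Matrix.of fun i j : Fin n => iteratedFDeriv ℝ 2 (heightRadialPow k c C q p) x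
      ![EuclideanSpace.single i (1 : ℝ), EuclideanSpace.single j (1 : ℝ)]) =
      heightRadialPow k c (-2 * C * p) q (p - 1) x • 1
        + heightRadialPow k c (4 * C * p * (p - 1)) q (p - 1 - 1) x • vecMulVec u u
        + heightRadialPow k c (-2 * C * q * p) (q - 1) (p - 1) x • (vecMulVec u e + vecMulVec e u)
        + (heightRadialPow k c (C * q * (q - 1)) (q - 1 - 1) p x
            - heightRadialPow k c (-2 * C * p) q (p - 1) x) • vecMulVec e e := by
    ext i j
    rw [of_apply, iteratedFDeriv_two_heightRadialPow hx hs]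
    obtain rfl | hi := eq_or_ne i k
    · obtain rfl | hj := eq_or_ne j i
      · simp [u, e, innerErase_apply, vecMulVec]
      · simp [u, e, innerErase_apply, vecMulVec, hj, hj.symm]
    · obtain rfl | hj := eq_or_ne j k
      · simp [u, e, innerErase_apply, vecMulVec, hi, hi.symm]
      · obtain rfl | hij := eq_or_ne i j
        · simp [u, e, innerErase_apply, vecMulVec, hi, hi.symm]; ring
        · simp [u, e, innerErase_apply, vecMulVec, hi, hj, hij, hi.symm, hj.symm,
            hij.symm]; ring
  have hue : u ⬝ᵥ e = 0 := by simp [u, e, dotProduct, Pi.single_apply]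
  have he : e ⬝ᵥ e = 1 := by simp [e, dotProduct, Pi.single_apply]
  have huu : u ⬝ᵥ u = normSqErase k x := by
    rw [normSqErase, ← Finset.filter_ne', Finset.sum_filter]
    simp only [u, dotProduct, sq]
    refine Finset.sum_congr rfl fun j _ => ?_
    by_cases hj : j = k <;> simp [hj]
  unfold hessianDet
  rw [hmat, det_smul_one_add_rankTwo (by simpa using hn) ha _ _ _ u e hue he, huu, Fintype.card_fin]

theorem hessianDet_subsolution (hn : 2 ≤ n) {M γ : ℝ} (hM : 0 < M) (hx : 0 < x k)
    (hs : normSqErase k x < c) :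
    hessianDet (fun y => -M * y k ^ γ * √(c - ∑ j ∈ univ.erase k, y j ^ 2)) x =
      M ^ n * γ * ((1 - γ) * c - γ * normSqErase k x) / √(c - normSqErase k x) ^ n
        * ((x k ^ γ) ^ n / x k ^ 2) := by
  have hW : (fun y => -M * y k ^ γ * √(c - ∑ j ∈ univ.erase k, y j ^ 2))
      = heightRadialPow k c (-M) γ (1 / 2) := by
    ext y
    rw [heightRadialPow, normSqErase, sqrt_eq_rpow]
  have hr : 0 < c - normSqErase k x := sub_pos.2 hs
  have hF : (c - normSqErase k x) ^ (1 / 2 : ℝ) = √(c - normSqErase k x) :=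
    (sqrt_eq_rpow _).symm
  have hF2 : c - normSqErase k x = √(c - normSqErase k x) ^ 2 := (sq_sqrt hr.le).symm
  rw [hW, hessianDet_heightRadialPow hn hx hs _ _ _
    (mul_pos (mul_pos (by linarith) (rpow_pos_of_pos hx _)) (rpow_pos_of_pos hr _)).ne']
  obtain ⟨m, rfl⟩ := Nat.exists_eq_add_of_le' hn
  simp only [heightRadialPow, rpow_sub_one hx.ne', rpow_sub_one hr.ne', hF, Nat.add_sub_cancel]
  have hF0 : 0 < √(c - normSqErase k x) := sqrt_pos.2 hr
  generalize √(c - normSqErase k x) = F at hF2 hF0 ⊢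
  obtain rfl : c = F ^ 2 + normSqErase k x := by linarith
  rw [add_sub_cancel_right, div_div, show -2 * -M * (1 / 2) = M by ring,
    show F / F ^ 2 = F⁻¹ by field_simp, show F / (F ^ 2 * F ^ 2) = (F ^ 3)⁻¹ by field_simp]
  simp only [mul_pow, inv_pow]
  field_simp
  ring

end Hessian

theorem subsolution_rhs_eq {n : ℕ} {A α β γ M t F : ℝ} (hγ : γ * (n + α) = β - n + 1)
    (ht : 0 < t) (hM : 0 < M) (hF : 0 < F) :
    A * t ^ (β - n - 1) * |-M * t ^ γ * F| ^ (-α)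
      = A * (M * F) ^ (-α) * ((t ^ γ) ^ n / t ^ 2) := by
  have hW : |-M * t ^ γ * F| = M * F * t ^ γ := by
    rw [neg_mul, neg_mul, abs_neg, abs_of_pos (by positivity)]; ring
  have hexp : β - n - 1 + γ * -α = γ * n - 2 := by linear_combination -hγ
  rw [hW, mul_rpow (by positivity) (by positivity), ← rpow_mul ht.le, mul_left_comm,
    mul_assoc, ← rpow_add ht, hexp, rpow_sub ht, rpow_mul ht.le, rpow_natCast, rpow_two]
  ring

theorem subsolution_coeff_le {n : ℕ} {A α γ l N F Q M : ℝ} (hA : 0 ≤ A) (hα : 0 ≤ α)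
    (hγ : 0 < γ) (hl : 0 < l) (hlF : l ≤ F) (hFN : F ≤ N * l) (hQ : l ^ 2 ≤ Q) (hM : 0 < M)
    (hMpow : M ^ ((n : ℝ) + α) = A * (N * l) ^ n / (γ * l ^ α * l ^ 2)) :
    A * (M * F) ^ (-α) ≤ M ^ n * γ * Q / F ^ n := by
  have hF : 0 < F := hl.trans_le hlF
  have hNl : 0 < N * l := hF.trans_le hFN
  rw [rpow_neg (by positivity), ← div_eq_mul_inv,
    div_le_div_iff₀ (by positivity) (by positivity)]
  calc A * F ^ n ≤ A * (N * l) ^ n := by gcongr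
    _ = A * (N * l) ^ n / (γ * l ^ α * l ^ 2) * (γ * l ^ α * l ^ 2) := by field_simp
    _ ≤ M ^ ((n : ℝ) + α) * (γ * F ^ α * Q) := by
      rw [hMpow]
      gcongr
    _ = M ^ n * γ * Q * (M * F) ^ α := by
      rw [rpow_add hM, rpow_natCast, mul_rpow hM.le hF.le]; ring

/-- There are constants `N > 1` and `M > 0` such that
`W(x) = -M xₙ^γ √(N²l² - |x'|²)` with `γ = (β-n+1)/(n+α)` satisfies
`det D²W ≥ A xₙ^{β-n-1} |W|^{-α}` on `{xₙ > 0, |x'| ≤ l}`. -/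
theorem exists_subsolution_halfspace
    (n : ℕ) (hn : 2 ≤ n) (A α l β : ℝ) (hA : 0 < A) (hα : 0 ≤ α) (hl : 0 < l)
    (hβ : (n : ℝ) + 1 ≤ β) (hβ' : β < α + 2 * n - 1) :
    ∃ N M : ℝ, 1 < N ∧ 0 < M ∧
      ∀ x : EuclideanSpace ℝ (Fin n),
        0 < x (lastIdx n (by omega)) →
        Real.sqrt (∑ j ∈ Finset.univ.erase (lastIdx n (by omega)), x j ^ 2) ≤ l →
        A * x (lastIdx n (by omega)) ^ (β - n - 1) *
            |-M * x (lastIdx n (by omega)) ^ ((β - n + 1) / (n + α)) *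
              Real.sqrt
                (N ^ 2 * l ^ 2 -
                  ∑ j ∈ Finset.univ.erase (lastIdx n (by omega)), x j ^ 2)| ^ (-α)
          ≤ hessianDet
              (fun y : EuclideanSpace ℝ (Fin n) =>
                -M * y (lastIdx n (by omega)) ^ ((β - n + 1) / (n + α)) *
                  Real.sqrt
                    (N ^ 2 * l ^ 2 -
                      ∑ j ∈ Finset.univ.erase (lastIdx n (by omega)), y j ^ 2)) x := by
  set k := lastIdx n (by omega)
  set γ := (β - n + 1) / (n + α)
  have hnα : 0 < (n : ℝ) + α := by positivity
  have hγ0 : 0 < γ := div_pos (by linarith) hnα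
  have hγ1 : γ < 1 := (div_lt_one hnα).2 (by linarith)
  have hγ : γ * (n + α) = β - n + 1 := div_mul_cancel₀ _ hnα.ne'
  set N := 2 / (1 - γ)
  have hN : 2 ≤ N := by rw [le_div_iff₀ (by linarith)]; linarith
  have hNγ : 4 ≤ (1 - γ) * N ^ 2 := by
    rw [div_pow, mul_div_assoc', le_div_iff₀ (by nlinarith)]
    nlinarith
  set M := (A * (N * l) ^ n / (γ * l ^ α * l ^ 2)) ^ ((n : ℝ) + α)⁻¹
  have hM : 0 < M := by positivity
  refine ⟨N, M, by linarith, hM, fun x hx hxl => ?_⟩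
  change 0 < x k at hx
  change √(normSqErase k x) ≤ l at hxl
  change _ * _ * |_ * _ * √(_ - normSqErase k x)| ^ _ ≤ _
  set S := normSqErase k x
  have hS : S ≤ l ^ 2 := (sqrt_le_left hl.le).1 hxl
  have hS0 : 0 ≤ S := sum_nonneg fun j _ => sq_nonneg _
  have hlF : l ≤ √(N ^ 2 * l ^ 2 - S) := le_sqrt_of_sq_le (by nlinarith)
  have hFN : √(N ^ 2 * l ^ 2 - S) ≤ N * l := sqrt_le_iff.2 ⟨by positivity, by nlinarith⟩
  rw [hessianDet_subsolution hn hM hx (by nlinarith),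
    subsolution_rhs_eq hγ hx hM (hl.trans_le hlF)]
  gcongr
  exact subsolution_coeff_le hA.le hα hγ0 hl hlF hFN (by nlinarith) hM
    (rpow_inv_rpow (by positivity) hnα.ne')
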